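/- For all natural numbers n ≥ i ≥ 0, the number of u-steps at level i+1 in all G-Motzkin paths of length n+1 equals the number of v-steps at level i in all G-Motzkin paths of length n+1 plus the number of v-steps at level i in all G-Motzkin paths of length n; that is, α_{n,i} = β_{n,i} + β_{n-1,i}. -/

import Mathlib

/-- Steps of a G-Motzkin path: up `(1,1)`, down `(1,-1)`, horizontal `(1,0)`,
vertical `(0,-1)`. -/
inductive GStep : Type
  | u | d | h | v
deriving DecidableEq, Repr

/-- Horizontal displacement of a step. -/
def GStep.x : GStep → ℕ
  | .u => 1
  | .d => 1
  | .h => 1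
  | .v => 0

/-- Vertical displacement of a step. -/
def GStep.y : GStep → ℤ
  | .u => 1
  | .d => -1
  | .h => 0
  | .v => -1

/-- The height (ordinate) of the path after its first `k` steps. -/
def gHeight (p : List GStep) (k : ℕ) : ℤ :=
  ((p.take k).map GStep.y).sum

/-- A G-Motzkin path: it stays in the first quadrant (all intermediate heights
are nonnegative) and ends at height `0`. -/
def IsGMotzkin (p : List GStep) : Prop :=
  (∀ k ≤ p.length, 0 ≤ gHeight p k) ∧ gHeight p p.length = 0

/-- The length of a G-Motzkin path, i.e. the abscissa of its final point. -/
def gLength (p : List GStep) : ℕ :=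
  (p.map GStep.x).sum

instance : Finite GStep :=
  Finite.of_injective (fun s => (match s with | .u => 0 | .d => 1 | .h => 2 | .v => 3 : Fin 4))
    (by intro a b; cases a <;> cases b <;> simp_all)

lemma GStep.y_le_one (s : GStep) : s.y ≤ 1 := by cases s <;> decide
lemma GStep.neg_one_le_y (s : GStep) : -1 ≤ s.y := by cases s <;> decide
lemma GStep.eq_u_of_y (s : GStep) (hs : s.y = 1) : s = .u := by cases s <;> simp_all [GStep.y]
lemma GStep.dv_of_y (s : GStep) (hs : s.y = -1) : s = .d ∨ s = .v := by
  cases s <;> simp_all [GStep.y]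

lemma gHeight_zero (p : List GStep) : gHeight p 0 = 0 := by simp [gHeight]

lemma gHeight_succ (p : List GStep) (k : ℕ) (s : GStep) (hk : p[k]? = some s) :
    gHeight p (k + 1) = gHeight p k + s.y := by
  unfold gHeight
  rw [List.take_succ, hk]
  simp

lemma gHeight_of_length_le (p : List GStep) (t : ℕ) (ht : p.length ≤ t) :
    gHeight p t = gHeight p p.length := by
  unfold gHeight
  rw [List.take_of_length_le ht, List.take_length]

lemma gHeight_motzkin_of_le (p : List GStep) (hp : IsGMotzkin p) (t : ℕ) (ht : p.length ≤ t) :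
    gHeight p t = 0 := by rw [gHeight_of_length_le p t ht, hp.2]

lemma sum_two_x_sub_y (p : List GStep) :
    (p.map (fun s => 2 * (s.x : ℤ) - s.y)).sum = 2 * (gLength p : ℤ) - gHeight p p.length := by
  induction p with
  | nil => simp [gLength, gHeight]
  | cons a l ih =>
    simp only [List.map_cons, List.sum_cons, ih]
    unfold gLength gHeight
    simp [List.take_length]
    ring

lemma length_le_of_motzkin (p : List GStep) (hp : IsGMotzkin p) :
    p.length ≤ 2 * gLength p := by
  have h1 : ((p.length : ℤ)) ≤ (p.map (fun s => 2 * (s.x : ℤ) - s.y)).sum := by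
    calc ((p.length : ℤ)) = ((p.map (fun _ => (1:ℤ))).sum) := by simp
    _ ≤ _ := by
        apply List.sum_le_sum
        intro s _
        cases s <;> decide
  rw [sum_two_x_sub_y, hp.2] at h1
  omega

lemma set_self (p : List GStep) (k : ℕ) (s : GStep) (hk : p[k]? = some s) :
    p.set k s = p := by
  apply List.ext_getElem?
  intro m
  rcases eq_or_ne m k with rfl | hm
  · rw [List.getElem?_set_self', hk]; rfl
  · rw [List.getElem?_set_ne (Ne.symm hm)]

lemma gHeight_set (p : List GStep) (k : ℕ) (a b : GStep) (hk : p[k]? = some b)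
    (hy : a.y = b.y) (t : ℕ) : gHeight (p.set k a) t = gHeight p t := by
  have : (p.set k a).map GStep.y = p.map GStep.y := by
    rw [List.map_set]
    nth_rw 2 [← set_self p k b hk]
    rw [List.map_set, hy]
  unfold gHeight
  rw [List.map_take, List.map_take, this]

lemma gLength_set (p : List GStep) (k : ℕ) (a b : GStep) (hk : p[k]? = some b) :
    gLength (p.set k a) + b.x = gLength p + a.x := by
  induction p generalizing k with
  | nil => simp at hk
  | cons c l ih =>
    cases k with
    | zero => simp at hk; subst hk; simp [gLength]; omega
    | succ m =>
      simp only [List.getElem?_cons_succ] at hk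
      have := ih m hk
      simp [gLength, List.set] at *
      omega

lemma exP (i : ℕ) (p : List GStep) (k : ℕ) :
    ∃ t, k + 2 ≤ t ∧ (gHeight p t ≤ (i : ℤ) ∨ p.length ≤ t) :=
  ⟨k + 2 + p.length, by omega, Or.inr (by omega)⟩

/-- index of the matching step of the u-step at index `k`. -/
noncomputable def mIdx (i : ℕ) (p : List GStep) (k : ℕ) : ℕ :=
  Nat.find (exP i p k) - 1

noncomputable def fM (i : ℕ) (pk : List GStep × ℕ) : List GStep × ℕ :=
  (pk.1, mIdx i pk.1 pk.2)

noncomputable def gM (i : ℕ) (pk : List GStep × ℕ) : List GStep × ℕ :=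
  (pk.1, Nat.findGreatest (fun t => gHeight pk.1 t ≤ (i : ℤ)) pk.2)

lemma forward (i : ℕ) (p : List GStep) (k : ℕ) (hp : IsGMotzkin p)
    (hu : p[k]? = some GStep.u) (hh : gHeight p (k + 1) = (i : ℤ) + 1) :
    k < mIdx i p k ∧ mIdx i p k < p.length ∧
      gHeight p (mIdx i p k + 1) = (i : ℤ) ∧
      (∃ s : GStep, p[mIdx i p k]? = some s ∧ s.y = -1) ∧
      (∀ t, k + 1 ≤ t → t ≤ mIdx i p k → (i : ℤ) + 1 ≤ gHeight p t) := by
  set m := Nat.find (exP i p k) with hmdef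
  have hspec := Nat.find_spec (exP i p k)
  rw [← hmdef] at hspec
  have hklen : k < p.length := by
    rcases List.getElem?_eq_some_iff.1 hu with ⟨h, _⟩; exact h
  have hgm : gHeight p m ≤ (i : ℤ) := by
    rcases hspec.2 with h | h
    · exact h
    · rw [gHeight_motzkin_of_le p hp m h]; exact_mod_cast Int.ofNat_nonneg i
  have hbet : ∀ t, k + 1 ≤ t → t < m → (i : ℤ) + 1 ≤ gHeight p t := by
    intro t h1 h2
    rcases eq_or_lt_of_le h1 with rfl | h1'
    · rw [hh]
    · have hnot := Nat.find_min (exP i p k) (by rw [← hmdef]; exact h2)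
      by_contra hcon
      push_neg at hcon
      exact hnot ⟨by omega, Or.inl (by omega)⟩
  have hmlen : m ≤ p.length := by
    by_contra hcon
    push_neg at hcon
    by_cases hc : k + 2 ≤ p.length
    · exact absurd ⟨hc, Or.inr le_rfl⟩ (Nat.find_min (exP i p k) (by rw [← hmdef]; exact hcon))
    · have hlk : p.length = k + 1 := by omega
      have := gHeight_motzkin_of_le p hp (k + 1) (by omega)
      omega
  have hk2 : k + 2 ≤ m := hspec.1
  have hj : mIdx i p k = m - 1 := by rw [mIdx, ← hmdef]
  set j := m - 1 with hjdef
  have hjm : j + 1 = m := by omega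
  have hjlen : j < p.length := by omega
  obtain ⟨s, hs⟩ : ∃ s, p[j]? = some s :=
    ⟨p[j]'hjlen, List.getElem?_eq_getElem hjlen⟩
  have hstep := gHeight_succ p j s hs
  have hhj : (i : ℤ) + 1 ≤ gHeight p j := hbet j (by omega) (by omega)
  rw [hjm] at hstep
  have hy1 : s.y ≤ 1 := s.y_le_one
  have hy2 : -1 ≤ s.y := s.neg_one_le_y
  have hsy : s.y = -1 := by omega
  refine ⟨by omega, by omega, ?_, ⟨s, by rw [hj]; exact hs, hsy⟩, ?_⟩
  · rw [hj, hjm]; omega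
  · intro t h1 h2
    exact hbet t h1 (by omega)

lemma backward (i : ℕ) (p : List GStep) (j : ℕ) (s : GStep) (hp : IsGMotzkin p)
    (hs : p[j]? = some s) (hy : s.y = -1) (hh : gHeight p (j + 1) = (i : ℤ)) :
    (Nat.findGreatest (fun t => gHeight p t ≤ (i : ℤ)) j) < j ∧
      p[(Nat.findGreatest (fun t => gHeight p t ≤ (i : ℤ)) j)]? = some GStep.u ∧
      gHeight p ((Nat.findGreatest (fun t => gHeight p t ≤ (i : ℤ)) j) + 1) = (i : ℤ) + 1 ∧
      (∀ t, (Nat.findGreatest (fun t => gHeight p t ≤ (i : ℤ)) j) < t → t ≤ j →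
        (i : ℤ) + 1 ≤ gHeight p t) := by
  have hjlen : j < p.length := by
    rcases List.getElem?_eq_some_iff.1 hs with ⟨h, _⟩; exact h
  have hstep := gHeight_succ p j s hs
  have hhj : gHeight p j = (i : ℤ) + 1 := by omega
  set k := Nat.findGreatest (fun t => gHeight p t ≤ (i : ℤ)) j with hkdef
  have hkle : k ≤ j := Nat.findGreatest_le j
  have hQk : gHeight p k ≤ (i : ℤ) := by
    rcases Nat.eq_zero_or_pos k with h0 | h0
    · rw [h0, gHeight_zero]; exact_mod_cast Int.ofNat_nonneg i
    · exact Nat.findGreatest_of_ne_zero hkdef.symm (by omega)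
  have hkj : k < j := by
    rcases Nat.lt_or_ge k j with h | h
    · exact h
    · have hkj' : k = j := by omega
      rw [hkj'] at hQk; omega
  have hgt : ∀ t, k < t → t ≤ j → (i : ℤ) + 1 ≤ gHeight p t := by
    intro t h1 h2
    have := Nat.findGreatest_is_greatest (P := fun t => gHeight p t ≤ (i : ℤ)) (n := j)
      (by rw [← hkdef]; exact h1) h2
    omega
  obtain ⟨a, ha⟩ : ∃ a, p[k]? = some a :=
    ⟨p[k]'(by omega), List.getElem?_eq_getElem (by omega)⟩
  have hstepk := gHeight_succ p k a ha
  have hk1 : (i : ℤ) + 1 ≤ gHeight p (k + 1) := hgt (k + 1) (by omega) (by omega)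
  have hy1 : a.y ≤ 1 := a.y_le_one
  have hau : a = GStep.u := a.eq_u_of_y (by omega)
  subst hau
  have hyu : GStep.y GStep.u = 1 := rfl
  rw [hyu] at hstepk
  exact ⟨hkj, ha, by omega, hgt⟩

lemma round1 (i : ℕ) (p : List GStep) (k : ℕ) (hp : IsGMotzkin p)
    (hu : p[k]? = some GStep.u) (hh : gHeight p (k + 1) = (i : ℤ) + 1) :
    Nat.findGreatest (fun t => gHeight p t ≤ (i : ℤ)) (mIdx i p k) = k := by
  obtain ⟨hkj, hjlen, hgj, hsj, hbet⟩ := forward i p k hp hu hh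
  set j := mIdx i p k with hjdef
  have hstep := gHeight_succ p k GStep.u hu
  have hyu : GStep.y GStep.u = 1 := rfl
  rw [hyu] at hstep
  have hQk : gHeight p k ≤ (i : ℤ) := by omega
  apply le_antisymm
  · by_contra hcon
    push_neg at hcon
    have hle : Nat.findGreatest (fun t => gHeight p t ≤ (i : ℤ)) j ≤ j := Nat.findGreatest_le j
    have hQ := Nat.findGreatest_of_ne_zero
      (P := fun t => gHeight p t ≤ (i : ℤ)) (n := j) rfl (by omega)
    have := hbet (Nat.findGreatest (fun t => gHeight p t ≤ (i : ℤ)) j) (by omega) hle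
    omega
  · exact Nat.le_findGreatest (by omega) hQk

lemma round2 (i : ℕ) (p : List GStep) (j : ℕ) (s : GStep) (hp : IsGMotzkin p)
    (hs : p[j]? = some s) (hy : s.y = -1) (hh : gHeight p (j + 1) = (i : ℤ)) :
    mIdx i p (Nat.findGreatest (fun t => gHeight p t ≤ (i : ℤ)) j) = j := by
  obtain ⟨hkj, hku, hkh, hgt⟩ := backward i p j s hp hs hy hh
  set k := Nat.findGreatest (fun t => gHeight p t ≤ (i : ℤ)) j with hkdef
  have hjlen : j < p.length := by
    rcases List.getElem?_eq_some_iff.1 hs with ⟨h, _⟩; exact h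
  have hfind : Nat.find (exP i p k) = j + 1 := by
    rw [Nat.find_eq_iff]
    refine ⟨⟨by omega, Or.inl (by omega)⟩, ?_⟩
    intro t ht hPt
    obtain ⟨h1, h2⟩ := hPt
    have h3 := hgt t (by omega) (by omega)
    rcases h2 with h2 | h2
    · omega
    · omega
  rw [mIdx, hfind]
  omega

lemma ncard_U_eq_W (n i : ℕ) :
    Set.ncard {pk : List GStep × ℕ |
        IsGMotzkin pk.1 ∧ gLength pk.1 = n + 1 ∧
        pk.1[pk.2]? = some GStep.u ∧ gHeight pk.1 (pk.2 + 1) = (i : ℤ) + 1} =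
    Set.ncard {pk : List GStep × ℕ |
        IsGMotzkin pk.1 ∧ gLength pk.1 = n + 1 ∧
        (∃ s : GStep, pk.1[pk.2]? = some s ∧ s.y = -1) ∧
        gHeight pk.1 (pk.2 + 1) = (i : ℤ)} := by
  classical
  set U : Set (List GStep × ℕ) := {pk |
      IsGMotzkin pk.1 ∧ gLength pk.1 = n + 1 ∧
      pk.1[pk.2]? = some GStep.u ∧ gHeight pk.1 (pk.2 + 1) = (i : ℤ) + 1} with hU
  set W : Set (List GStep × ℕ) := {pk |
      IsGMotzkin pk.1 ∧ gLength pk.1 = n + 1 ∧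
      (∃ s : GStep, pk.1[pk.2]? = some s ∧ s.y = -1) ∧
      gHeight pk.1 (pk.2 + 1) = (i : ℤ)} with hW
  have himg : fM i '' U = W := by
    apply Set.eq_of_subset_of_subset
    · rintro ⟨p, j⟩ ⟨⟨q, k⟩, hmem, heq⟩
      obtain ⟨hp, hlen, hu, hh⟩ := hmem
      simp only [fM] at heq
      obtain ⟨rfl, rfl⟩ := Prod.mk.injEq .. ▸ heq
      obtain ⟨_, _, hgj, hsj, _⟩ := forward i q k hp hu hh
      exact ⟨hp, hlen, hsj, hgj⟩
    · rintro ⟨p, j⟩ ⟨hp, hlen, ⟨s, hs, hy⟩, hh⟩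
      refine ⟨(p, Nat.findGreatest (fun t => gHeight p t ≤ (i : ℤ)) j), ?_, ?_⟩
      · obtain ⟨hkj, hku, hkh, _⟩ := backward i p j s hp hs hy hh
        exact ⟨hp, hlen, hku, hkh⟩
      · simp only [fM]
        rw [round2 i p j s hp hs hy hh]
  have hinj : Set.InjOn (fM i) U := by
    rintro ⟨p, k⟩ hpk ⟨q, k'⟩ hqk' heq
    obtain ⟨hp, _, hu, hh⟩ := hpk
    obtain ⟨hq, _, hu', hh'⟩ := hqk'
    have h1 : gM i (fM i (p, k)) = (p, k) := by
      simp only [fM, gM]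
      exact congrArg (Prod.mk p) (round1 i p k hp hu hh)
    have h2 : gM i (fM i (q, k')) = (q, k') := by
      simp only [fM, gM]
      exact congrArg (Prod.mk q) (round1 i q k' hq hu' hh')
    rw [← h1, ← h2, heq]
  rw [← himg, Set.ncard_image_of_injOn hinj]

lemma finite_aux (N : ℕ) (s : GStep) (c : ℤ) :
    {pk : List GStep × ℕ | IsGMotzkin pk.1 ∧ gLength pk.1 = N ∧
        pk.1[pk.2]? = some s ∧ gHeight pk.1 (pk.2 + 1) = c}.Finite := by
  apply Set.Finite.subset
    (Set.Finite.prod (List.finite_length_le GStep (2 * N)) (Set.finite_Iio (2 * N)))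
  rintro ⟨p, k⟩ ⟨hp, hlen, hk, _⟩
  have h1 : p.length ≤ 2 * N := by
    have h2 := length_le_of_motzkin p hp
    have h3 : gLength p = N := hlen
    omega
  have h2 : k < p.length := (List.getElem?_eq_some_iff.1 hk).1
  exact ⟨h1, by simp only [Set.mem_Iio]; omega⟩

lemma ncard_W_split (n i : ℕ) :
    Set.ncard {pk : List GStep × ℕ |
        IsGMotzkin pk.1 ∧ gLength pk.1 = n + 1 ∧
        (∃ s : GStep, pk.1[pk.2]? = some s ∧ s.y = -1) ∧
        gHeight pk.1 (pk.2 + 1) = (i : ℤ)} =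
    Set.ncard {pk : List GStep × ℕ |
        IsGMotzkin pk.1 ∧ gLength pk.1 = n + 1 ∧
        pk.1[pk.2]? = some GStep.v ∧ gHeight pk.1 (pk.2 + 1) = (i : ℤ)} +
    Set.ncard {pk : List GStep × ℕ |
        IsGMotzkin pk.1 ∧ gLength pk.1 = n + 1 ∧
        pk.1[pk.2]? = some GStep.d ∧ gHeight pk.1 (pk.2 + 1) = (i : ℤ)} := by
  have hsplit : {pk : List GStep × ℕ |
        IsGMotzkin pk.1 ∧ gLength pk.1 = n + 1 ∧
        (∃ s : GStep, pk.1[pk.2]? = some s ∧ s.y = -1) ∧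
        gHeight pk.1 (pk.2 + 1) = (i : ℤ)} =
      {pk : List GStep × ℕ |
        IsGMotzkin pk.1 ∧ gLength pk.1 = n + 1 ∧
        pk.1[pk.2]? = some GStep.v ∧ gHeight pk.1 (pk.2 + 1) = (i : ℤ)} ∪
      {pk : List GStep × ℕ |
        IsGMotzkin pk.1 ∧ gLength pk.1 = n + 1 ∧
        pk.1[pk.2]? = some GStep.d ∧ gHeight pk.1 (pk.2 + 1) = (i : ℤ)} := by
    ext ⟨p, k⟩
    simp only [Set.mem_setOf_eq, Set.mem_union]
    constructor
    · rintro ⟨hp, hlen, ⟨s, hs, hy⟩, hh⟩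
      rcases s.dv_of_y hy with rfl | rfl
      · exact Or.inr ⟨hp, hlen, hs, hh⟩
      · exact Or.inl ⟨hp, hlen, hs, hh⟩
    · rintro (⟨hp, hlen, hs, hh⟩ | ⟨hp, hlen, hs, hh⟩)
      · exact ⟨hp, hlen, ⟨GStep.v, hs, rfl⟩, hh⟩
      · exact ⟨hp, hlen, ⟨GStep.d, hs, rfl⟩, hh⟩
  rw [hsplit]
  apply Set.ncard_union_eq
  · rw [Set.disjoint_left]
    rintro ⟨p, k⟩ ⟨_, _, hv, _⟩ ⟨_, _, hd, _⟩
    rw [hv] at hd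
    simp at hd
  · exact finite_aux (n + 1) GStep.v (i : ℤ)
  · exact finite_aux (n + 1) GStep.d (i : ℤ)

lemma ncard_D_eq_B (n i : ℕ) :
    Set.ncard {pk : List GStep × ℕ |
        IsGMotzkin pk.1 ∧ gLength pk.1 = n + 1 ∧
        pk.1[pk.2]? = some GStep.d ∧ gHeight pk.1 (pk.2 + 1) = (i : ℤ)} =
    Set.ncard {pk : List GStep × ℕ |
        IsGMotzkin pk.1 ∧ gLength pk.1 = n ∧
        pk.1[pk.2]? = some GStep.v ∧ gHeight pk.1 (pk.2 + 1) = (i : ℤ)} := by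
  classical
  set D : Set (List GStep × ℕ) := {pk |
      IsGMotzkin pk.1 ∧ gLength pk.1 = n + 1 ∧
      pk.1[pk.2]? = some GStep.d ∧ gHeight pk.1 (pk.2 + 1) = (i : ℤ)} with hD
  set B : Set (List GStep × ℕ) := {pk |
      IsGMotzkin pk.1 ∧ gLength pk.1 = n ∧
      pk.1[pk.2]? = some GStep.v ∧ gHeight pk.1 (pk.2 + 1) = (i : ℤ)} with hB
  set f : List GStep × ℕ → List GStep × ℕ := fun pk => (pk.1.set pk.2 GStep.v, pk.2) with hf
  have hyvd : GStep.y GStep.v = GStep.y GStep.d := rfl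
  have himg : f '' D = B := by
    apply Set.eq_of_subset_of_subset
    · rintro ⟨p, j⟩ ⟨⟨q, k⟩, ⟨hq, hlen, hd, hh⟩, heq⟩
      simp only [hf] at heq
      obtain ⟨rfl, rfl⟩ := Prod.mk.injEq .. ▸ heq
      have hklen : k < q.length := (List.getElem?_eq_some_iff.1 hd).1
      have hht : ∀ t, gHeight (q.set k GStep.v) t = gHeight q t :=
        gHeight_set q k GStep.v GStep.d hd hyvd
      refine ⟨⟨?_, ?_⟩, ?_, ?_, ?_⟩
      · intro t ht
        rw [hht]
        exact hq.1 t (by simpa using ht)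
      · rw [List.length_set, hht]; exact hq.2
      · have hgl := gLength_set q k GStep.v GStep.d hd
        simp [GStep.x] at hgl
        have hlen' : gLength q = n + 1 := hlen
        show gLength (q.set k GStep.v) = n
        omega
      · exact List.getElem?_set_self hklen
      · rw [hht]; exact hh
    · rintro ⟨q, k⟩ ⟨hq, hlen, hv, hh⟩
      have hklen : k < q.length := (List.getElem?_eq_some_iff.1 hv).1
      refine ⟨(q.set k GStep.d, k), ?_, ?_⟩
      · have hht : ∀ t, gHeight (q.set k GStep.d) t = gHeight q t :=
          gHeight_set q k GStep.d GStep.v hv hyvd.symm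
        refine ⟨⟨?_, ?_⟩, ?_, ?_, ?_⟩
        · intro t ht
          rw [hht]
          exact hq.1 t (by simpa using ht)
        · rw [List.length_set, hht]; exact hq.2
        · have hgl := gLength_set q k GStep.d GStep.v hv
          simp [GStep.x] at hgl
          have hlen' : gLength q = n := hlen
          show gLength (q.set k GStep.d) = n + 1
          omega
        · exact List.getElem?_set_self hklen
        · rw [hht]; exact hh
      · simp only [hf, List.set_set]
        rw [set_self q k GStep.v hv]
  have hinj : Set.InjOn f D := by
    rintro ⟨p, k⟩ ⟨_, _, hd, _⟩ ⟨q, k'⟩ ⟨_, _, hd', _⟩ heq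
    simp only [hf, Prod.mk.injEq] at heq
    obtain ⟨h1, rfl⟩ := heq
    have : (p.set k GStep.v).set k GStep.d = (q.set k GStep.v).set k GStep.d := by rw [h1]
    rw [List.set_set, List.set_set, set_self p k GStep.d hd, set_self q k GStep.d hd'] at this
    rw [this]
  rw [← himg, Set.ncard_image_of_injOn hinj]


/-- For all `n ≥ i ≥ 0`: the number of u-steps at level `i+1` in all G-Motzkin
paths of length `n+1` equals the number of v-steps at level `i` in all
G-Motzkin paths of length `n+1` plus the number of v-steps at level `i` in all
G-Motzkin paths of length `n` (i.e. `α_{n,i} = β_{n,i} + β_{n-1,i}`).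
A step (the `k`-th step of a path) is at level `ℓ` if the ordinate of its
endpoint is `ℓ`; steps are counted as pairs (path, index of the step). -/
theorem uSteps_level_succ_eq_vSteps_add_vSteps (n i : ℕ) (hin : i ≤ n) :
    Set.ncard {pk : List GStep × ℕ |
        IsGMotzkin pk.1 ∧ gLength pk.1 = n + 1 ∧
        pk.1[pk.2]? = some GStep.u ∧ gHeight pk.1 (pk.2 + 1) = (i : ℤ) + 1} =
    Set.ncard {pk : List GStep × ℕ |
        IsGMotzkin pk.1 ∧ gLength pk.1 = n + 1 ∧
        pk.1[pk.2]? = some GStep.v ∧ gHeight pk.1 (pk.2 + 1) = (i : ℤ)} +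
    Set.ncard {pk : List GStep × ℕ |
        IsGMotzkin pk.1 ∧ gLength pk.1 = n ∧
        pk.1[pk.2]? = some GStep.v ∧ gHeight pk.1 (pk.2 + 1) = (i : ℤ)} := by
  rw [ncard_U_eq_W n i, ncard_W_split n i, ncard_D_eq_B n i]
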